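/- arXiv:2112.05081 — 2 statements merged into one kernel-verified Lean document; each statement's English description precedes it below -/
import Mathlib

section
/- Let K be a field of characteristic different from 2 and let d, p, q, r ∈ K^×. Then the diagonal quadratic form ⟨1, −d, −p, q, r, −dpqr⟩ over K (in six variables) is similar to the diagonal quadratic form ⟨p, d, −pd, −dpq, −dpr, qr⟩; that is, there exists λ ∈ K^× such that λ·⟨1, −d, −p, q, r, −dpqr⟩ is equivalent (isometric) to ⟨p, d, −pd, −dpq, −dpr, qr⟩. -/
open QuadraticMap


private lemma v0 {α : Type*} (a b c d e f : α) : ![a, b, c, d, e, f] 0 = a := rfl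
private lemma v1 {α : Type*} (a b c d e f : α) : ![a, b, c, d, e, f] 1 = b := rfl
private lemma v2 {α : Type*} (a b c d e f : α) : ![a, b, c, d, e, f] 2 = c := rfl
private lemma v3 {α : Type*} (a b c d e f : α) : ![a, b, c, d, e, f] 3 = d := rfl
private lemma v4 {α : Type*} (a b c d e f : α) : ![a, b, c, d, e, f] 4 = e := rfl
private lemma v5 {α : Type*} (a b c d e f : α) : ![a, b, c, d, e, f] 5 = f := rfl

/-- Over a field `K` of characteristic `≠ 2`, for `d, p, q, r ∈ K^×`, the
diagonal quadratic form `⟨1, −d, −p, q, r, −dpqr⟩` in six variables is similar to the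
diagonal form `⟨p, d, −pd, −dpq, −dpr, qr⟩`: some scalar multiple `λ • ⟨1,−d,−p,q,r,−dpqr⟩`
with `λ ≠ 0` is equivalent (isometric) to `⟨p, d, −pd, −dpq, −dpr, qr⟩`. -/
theorem albert_form_similar
    (K : Type) [Field K] (hchar : ringChar K ≠ 2)
    (d p q r : K) (hd : d ≠ 0) (hp : p ≠ 0) (hq : q ≠ 0) (hr : r ≠ 0) :
    ∃ lam : K, lam ≠ 0 ∧
      (lam • weightedSumSquares K ![1, -d, -p, q, r, -(d * p * q * r)]).Equivalent
        (weightedSumSquares K ![p, d, -(p * d), -(d * p * q), -(d * p * r), q * r]) := by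
  refine ⟨-(d * p), by simp [hd, hp], ?_⟩
  have hdp : d * p ≠ 0 := mul_ne_zero hd hp
  let f : (Fin 6 → K) ≃ₗ[K] (Fin 6 → K) :=
    { toFun := fun x => ![d * x 1, p * x 2, x 0, x 3, x 4, d * p * x 5]
      invFun := fun y => ![y 2, d⁻¹ * y 0, p⁻¹ * y 1, y 3, y 4, (d * p)⁻¹ * y 5]
      map_add' := by
        intro x y
        funext i
        fin_cases i <;> simp [v0, v1, v2, v3, v4, v5] <;> ring
      map_smul' := by
        intro c x
        funext i
        fin_cases i <;> simp [v0, v1, v2, v3, v4, v5] <;> ring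
      left_inv := by
        intro x
        funext i
        fin_cases i <;>
          simp [v0, v1, v2, v3, v4, v5] <;>
          (try field_simp) <;> (try ring)
      right_inv := by
        intro y
        funext i
        fin_cases i <;>
          simp [v0, v1, v2, v3, v4, v5] <;>
          ((try field_simp) <;> (try ring)) }
  refine ⟨{ f with map_app' := ?_ }⟩
  intro x
  show (weightedSumSquares K ![p, d, -(p * d), -(d * p * q), -(d * p * r), q * r]) (f x)
      = (-(d * p) • weightedSumSquares K ![1, -d, -p, q, r, -(d * p * q * r)]) x
  simp only [QuadraticMap.smul_apply, weightedSumSquares_apply, Fin.sum_univ_six, smul_eq_mul, v0, v1, v2, v3, v4, v5]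
  show p * (d * x 1 * (d * x 1)) + d * (p * x 2 * (p * x 2)) +
      -(p * d) * (x 0 * x 0) + -(d * p * q) * (x 3 * x 3) +
      -(d * p * r) * (x 4 * x 4) + q * r * (d * p * x 5 * (d * p * x 5)) = _
  ring
end

section
/- Let K be a field of characteristic different from 2, let d ∈ K^× be a non-square, and set L = K(√d). Let φ = ⟨a₁, a₂, a₃, a₄, a₅, a₆⟩ be an anisotropic diagonal quadratic form in six variables over K whose determinant a₁a₂a₃a₄a₅a₆ lies in −(K^×)² (i.e., equals −u² for some u ∈ K^×). If φ becomes isotropic after extension of scalars to L, then there exist λ, p, q, r ∈ K^× such that φ is equivalent (isometric) to λ·⟨1, −d, −p, q, r, −dpqr⟩. -/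
/-!
Write an isotropic vector of `φ` over `L` as `x + √d y` with `x, y ∈ K⁶`. Since `1, √d` is a
`K`-basis of `L`, its two coordinates give `φ(x) = -d φ(y)` and `x ⊥ y`, and `φ(y) ≠ 0` by
anisotropy. Extending `y, x` to an orthogonal basis diagonalises `φ ≅ ⟨l, -dl, c₂, c₃, c₄, c₅⟩`
with `l = φ(y)`. The determinant is an invariant up to squares, so `-d l² c₂ c₃ c₄ c₅` is minus a
square: `c₅` lies in the square class of `d c₂ c₃ c₄`, which is the last entry of
`l ⟨1, -d, -p, q, r, -dpqr⟩` for `p = -c₂/l`, `q = c₃/l`, `r = c₄/l`.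
-/

open QuadraticMap Module

theorem polar_weightedSumSquares {R n : Type*} [CommRing R] [Fintype n] (w x y : n → R) :
    polar (weightedSumSquares R w) x y = 2 * ∑ i, w i * (x i * y i) := by
  simp only [polar, weightedSumSquares_apply, smul_eq_mul, Pi.add_apply, Finset.mul_sum,
    ← Finset.sum_sub_distrib]
  exact Finset.sum_congr rfl fun i _ => by ring

section Discriminant

variable {K : Type*} [Field K] [Invertible (2 : K)] {n : Type*} [Fintype n] [DecidableEq n]

theorem toMatrix'_weightedSumSquares (w : n → K) :
    QuadraticForm.toMatrix' (weightedSumSquares K w) = Matrix.diagonal w := by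
  ext i j
  rw [Matrix.diagonal_apply, QuadraticForm.toMatrix', LinearMap.toMatrix₂'_apply,
    associated_apply, ← polar, polar_weightedSumSquares]
  rcases eq_or_ne i j with rfl | hij
  · simp [Pi.single_apply, inv_mul_cancel_left₀ (Invertible.ne_zero (2 : K))]
  · simp [Pi.single_apply, hij, hij.symm]

theorem discr'_weightedSumSquares (w : n → K) :
    QuadraticForm.discr' (weightedSumSquares K w) = ∏ i, w i := by
  rw [QuadraticForm.discr', toMatrix'_weightedSumSquares, Matrix.det_diagonal]

theorem QuadraticMap.Equivalent.exists_prod_eq_sq_mul_prod {w w' : n → K}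
    (h : (weightedSumSquares K w).Equivalent (weightedSumSquares K w')) :
    ∃ e : K, e ≠ 0 ∧ ∏ i, w i = e ^ 2 * ∏ i, w' i := by
  obtain ⟨f⟩ := h
  have hcomp : weightedSumSquares K w =
      (weightedSumSquares K w').comp (f.toLinearEquiv : (n → K) →ₗ[K] n → K) := by
    ext m; exact (f.map_app m).symm
  refine ⟨_, ?_, by
    rw [← discr'_weightedSumSquares, hcomp, QuadraticForm.discr'_comp,
      discr'_weightedSumSquares, pow_two]⟩
  rw [LinearMap.det_toMatrix']
  exact f.toLinearEquiv.isUnit_det'.ne_zero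

end Discriminant

section QuadraticExtension

variable {K L : Type*} [Field K] [Field L] [Algebra K L] {d : K} {δ : L}

theorem linearIndependent_one_of_sq_eq_algebraMap (hd : ¬∃ x : K, x ^ 2 = d)
    (hδ : δ ^ 2 = algebraMap K L d) : LinearIndependent K ![1, δ] := by
  rw [LinearIndependent.pair_iff]
  intro s t hst
  obtain rfl | ht := eq_or_ne t 0
  · simpa using hst
  · refine (hd ⟨-s / t, (algebraMap K L).injective ?_⟩).elim
    have hδ' : δ = algebraMap K L (-s / t) := by
      rw [map_div₀, _root_.map_neg, eq_div_iff (by simpa using ht)]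
      rw [Algebra.smul_def, Algebra.smul_def, mul_one] at hst
      linear_combination hst
    rw [map_pow, ← hδ', hδ]

theorem algebraMap_add_algebraMap_mul_eq_zero (hd : ¬∃ x : K, x ^ 2 = d)
    (hδ : δ ^ 2 = algebraMap K L d) {s t : K}
    (h : algebraMap K L s + algebraMap K L t * δ = 0) : s = 0 ∧ t = 0 := by
  refine (LinearIndependent.pair_iff (x := 1) (y := δ)).1
    (linearIndependent_one_of_sq_eq_algebraMap hd hδ) s t ?_
  rw [Algebra.smul_def, Algebra.smul_def, mul_one, h]

theorem exists_algebraMap_add_algebraMap_mul_eq (hd : ¬∃ x : K, x ^ 2 = d)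
    (hδ : δ ^ 2 = algebraMap K L d) (hL : finrank K L = 2) (z : L) :
    ∃ s t : K, algebraMap K L s + algebraMap K L t * δ = z := by
  have hli := linearIndependent_one_of_sq_eq_algebraMap hd hδ
  let b := basisOfLinearIndependentOfCardEqFinrank hli (by simp [hL])
  have hb : ⇑b = ![1, δ] := coe_basisOfLinearIndependentOfCardEqFinrank hli _
  refine ⟨b.repr z 0, b.repr z 1, ?_⟩
  simpa [Fin.sum_univ_two, hb, Algebra.smul_def] using b.sum_repr z

variable {n : Type*} [Fintype n]

theorem weightedSumSquares_algebraMap_add_algebraMap_mul (hδ : δ ^ 2 = algebraMap K L d)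
    (a x y : n → K) :
    weightedSumSquares L (fun i => algebraMap K L (a i))
        (fun i => algebraMap K L (x i) + algebraMap K L (y i) * δ) =
      algebraMap K L (weightedSumSquares K a x + d * weightedSumSquares K a y) +
        algebraMap K L (polar (weightedSumSquares K a) x y) * δ := by
  simp only [polar_weightedSumSquares, weightedSumSquares_apply, smul_eq_mul, Finset.mul_sum,
    ← Finset.sum_add_distrib, map_sum, Finset.sum_mul]
  refine Finset.sum_congr rfl fun i _ => ?_
  simp only [map_add, map_mul, map_ofNat]
  linear_combination algebraMap K L (a i) * algebraMap K L (y i) ^ 2 * hδ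

theorem exists_isOrtho_of_not_anisotropic_algebraMap (hd : ¬∃ x : K, x ^ 2 = d)
    (hδ : δ ^ 2 = algebraMap K L d) (hL : finrank K L = 2) {a : n → K}
    (haniso : (weightedSumSquares K a).Anisotropic)
    (hiso : ¬(weightedSumSquares L fun i => algebraMap K L (a i)).Anisotropic) :
    ∃ x y : n → K, weightedSumSquares K a y ≠ 0 ∧
      weightedSumSquares K a x = -(d * weightedSumSquares K a y) ∧
      (weightedSumSquares K a).IsOrtho x y := by
  obtain ⟨v, hv, hv0⟩ := not_forall₂.1 hiso
  choose x y hxy using fun i => exists_algebraMap_add_algebraMap_mul_eq hd hδ hL (v i)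
  obtain rfl : (fun i => algebraMap K L (x i) + algebraMap K L (y i) * δ) = v := funext hxy
  rw [weightedSumSquares_algebraMap_add_algebraMap_mul hδ] at hv
  obtain ⟨hxy, hpolar⟩ := algebraMap_add_algebraMap_mul_eq_zero hd hδ hv
  refine ⟨x, y, fun hy => hv0 ?_, by linear_combination hxy, isOrtho_polarBilin.1 hpolar⟩
  obtain rfl := haniso y hy
  obtain rfl := haniso x (by simpa using hxy)
  ext; simp

end QuadraticExtension

section Orthogonal

variable {K V : Type*} [Field K] [Invertible (2 : K)] [AddCommGroup V] [Module K V]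
  {Q : QuadraticForm K V}

theorem QuadraticForm.equivalent_weightedSumSquares_of_iIsOrtho {ι : Type*} [Fintype ι]
    (b : Basis ι K V) (hb : (associated (R := K) Q).IsOrthoᵢ b) :
    Q.Equivalent (weightedSumSquares K fun i => Q (b i)) :=
  ⟨basisRepr_eq_of_iIsOrtho Q b hb ▸ Q.isometryEquivBasisRepr b⟩

variable [FiniteDimensional K V]

theorem QuadraticMap.Anisotropic.isCompl_orthogonal (hQ : Q.Anisotropic) (W : Submodule K V) :
    IsCompl W (LinearMap.BilinForm.orthogonal (associated (R := K) Q) W) := by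
  refine (LinearMap.BilinForm.isCompl_orthogonal_iff_disjoint
    (QuadraticForm.associated_isSymm K Q).isRefl).2 (Submodule.disjoint_def.2 fun w hw hw' => ?_)
  exact hQ w (by rw [← associated_eq_self_apply K]; exact hw' w hw)

theorem QuadraticMap.Anisotropic.exists_basis_iIsOrtho_extending (hQ : Q.Anisotropic)
    {ι : Type*} {v : ι → V} (hv : (associated (R := K) Q).IsOrthoᵢ v) (hv0 : ∀ i, Q (v i) ≠ 0) :
    ∃ (m : ℕ) (b : Basis (ι ⊕ Fin m) K V),
      (associated (R := K) Q).IsOrthoᵢ b ∧ ∀ i, b (.inl i) = v i := by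
  set B := associated (R := K) Q
  have hli : LinearIndependent K v :=
    LinearMap.BilinForm.linearIndependent_of_iIsOrtho hv fun i => by
      rw [associated_eq_self_apply]; exact hv0 i
  set W := Submodule.span K (Set.range v)
  set W' := LinearMap.BilinForm.orthogonal B W
  obtain ⟨c, hc⟩ := LinearMap.BilinForm.exists_orthogonal_basis
    (QuadraticForm.associated_isSymm K (Q.comp W'.subtype))
  let b := ((Basis.span hli).prod c).map
    (Submodule.prodEquivOfIsCompl W W' (hQ.isCompl_orthogonal W))
  have hb_inl : ∀ i, b (.inl i) = v i := fun i => by simp [b, Basis.span_apply]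
  have hb_inr : ∀ j, b (.inr j) = c j := fun j => by simp [b]
  have hWW' : ∀ i j, B (v i) (c j) = 0 := fun i j =>
    (c j).2 (v i) (Submodule.subset_span ⟨i, rfl⟩)
  refine ⟨_, b, ?_, hb_inl⟩
  rintro (i | i) (j | j) hij <;> simp only [Function.onFun, hb_inl, hb_inr]
  · exact hv (ne_of_apply_ne Sum.inl hij)
  · exact hWW' i j
  · rw [← LinearMap.IsSymm.eq_iff (QuadraticForm.associated_isSymm K Q)]
    exact hWW' j i
  · exact associated_isOrtho.2 (by simpa [Function.onFun] using hc (ne_of_apply_ne Sum.inr hij))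

theorem QuadraticMap.Anisotropic.exists_equivalent_weightedSumSquares_append
    (hQ : Q.Anisotropic) {k m : ℕ} (hV : finrank K V = k + m) {v : Fin k → V}
    (hv : (associated (R := K) Q).IsOrthoᵢ v) (hv0 : ∀ i, Q (v i) ≠ 0) :
    ∃ c : Fin m → K, Q.Equivalent (weightedSumSquares K (Fin.append (fun i => Q (v i)) c)) := by
  obtain ⟨m', b, hb, hbv⟩ := hQ.exists_basis_iIsOrtho_extending hv hv0
  obtain rfl : m' = m := by simpa [hV] using (finrank_eq_card_basis b).symm
  refine ⟨fun j => Q (b (.inr j)), ?_⟩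
  have hb' : (associated (R := K) Q).IsOrthoᵢ (b.reindex finSumFinEquiv) := fun i j hij => by
    simpa [Function.onFun] using hb (finSumFinEquiv.symm.injective.ne hij)
  convert QuadraticForm.equivalent_weightedSumSquares_of_iIsOrtho _ hb' using 2
  ext i
  refine Fin.addCases (fun i => ?_) (fun j => ?_) i <;> simp [hbv]

end Orthogonal

section NormalForm

variable {K : Type*} [Field K]

theorem smul_weightedSumSquares {n : Type*} [Fintype n] (l : K) (w : n → K) :
    l • weightedSumSquares K w = weightedSumSquares K (l • w) := by
  ext v
  simp [Finset.mul_sum, mul_assoc]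

theorem exists_equivalent_smul_normal_form {d l c₂ c₃ c₄ c₅ s : K} (hs : s ≠ 0)
    (hdisc : l * -(d * l) * c₂ * c₃ * c₄ * c₅ = -s ^ 2) :
    ∃ p q r : K, p ≠ 0 ∧ q ≠ 0 ∧ r ≠ 0 ∧
      (weightedSumSquares K ![l, -(d * l), c₂, c₃, c₄, c₅]).Equivalent
        (l • weightedSumSquares K ![1, -d, -p, q, r, -(d * p * q * r)]) := by
  have hprod : d * l * l * c₂ * c₃ * c₄ * c₅ ≠ 0 := by
    rw [show d * l * l * c₂ * c₃ * c₄ * c₅ = s ^ 2 by linear_combination -hdisc]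
    exact pow_ne_zero 2 hs
  simp only [mul_ne_zero_iff] at hprod
  obtain ⟨⟨⟨⟨⟨⟨hd, hl⟩, -⟩, h₂⟩, h₃⟩, h₄⟩, h₅⟩ := hprod
  refine ⟨-c₂ / l, c₃ / l, c₄ / l, by simp [*], by simp [*], by simp [*], ?_⟩
  rw [smul_weightedSumSquares]
  set σ := s / (d * c₂ * c₃ * c₄)
  have hσ : σ ≠ 0 := by simp [σ, *]
  refine ⟨QuadraticForm.isometryEquivWeightedSumSquaresWeightedSumSquares
    (fun i => Units.mk0 (![1, 1, 1, 1, 1, σ] i) (by fin_cases i <;> simp [hσ])) fun i => ?_⟩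
  fin_cases i <;> simp [σ] <;> field_simp
  linear_combination hdisc

end NormalForm

theorem anisotropic_sixdim_normal_form_general
    (K L : Type) [Field K] [Field L] [Algebra K L]
    (hchar : ringChar K ≠ 2)
    (d : K) (hnonsq : ¬∃ x : K, x ^ 2 = d)
    (hquad : Module.finrank K L = 2)
    (hsqrt : ∃ δ : L, δ ^ 2 = algebraMap K L d)
    (a : Fin 6 → K)
    (hdet : ∃ u : K, u ≠ 0 ∧ a 0 * a 1 * a 2 * a 3 * a 4 * a 5 = -(u ^ 2))
    (haniso : (weightedSumSquares K a).Anisotropic)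
    (hiso : ¬(weightedSumSquares L fun i => algebraMap K L (a i)).Anisotropic) :
    ∃ lam p q r : K, lam ≠ 0 ∧ p ≠ 0 ∧ q ≠ 0 ∧ r ≠ 0 ∧
      (weightedSumSquares K a).Equivalent
        (lam • weightedSumSquares K ![1, -d, -p, q, r, -(d * p * q * r)]) := by
  have : Invertible (2 : K) := invertibleOfNonzero (Ring.two_ne_zero hchar)
  have hd : d ≠ 0 := by rintro rfl; exact hnonsq ⟨0, zero_pow two_ne_zero⟩
  obtain ⟨δ, hδ⟩ := hsqrt
  obtain ⟨x, y, hy, hx, hxy⟩ :=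
    exists_isOrtho_of_not_anisotropic_algebraMap hnonsq hδ hquad haniso hiso
  set Q := weightedSumSquares K a
  have hv : (associated (R := K) Q).IsOrthoᵢ ![y, x] := by
    intro i j hij
    fin_cases i <;> fin_cases j <;> simp [Function.onFun, hxy, hxy.symm] at hij ⊢
  obtain ⟨c, hc⟩ := haniso.exists_equivalent_weightedSumSquares_append (k := 2) (m := 4)
    (by simp) hv (by simp [Fin.forall_fin_two, hy, hx, hd])
  have hw : Fin.append (fun i => Q (![y, x] i)) c = ![Q y, Q x, c 0, c 1, c 2, c 3] := by
    ext i; fin_cases i <;> rfl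
  rw [hw, hx] at hc
  obtain ⟨e, he, hdisc⟩ := hc.exists_prod_eq_sq_mul_prod
  obtain ⟨u, hu, hdet⟩ := hdet
  have hdisc' : Q y * -(d * Q y) * c 0 * c 1 * c 2 * c 3 = -(u / e) ^ 2 := by
    simp only [Fin.prod_univ_six, hdet, Matrix.cons_val] at hdisc
    field_simp
    linear_combination -hdisc
  obtain ⟨p, q, r, hp, hq, hr, hnf⟩ :=
    exists_equivalent_smul_normal_form (div_ne_zero hu he) hdisc'
  exact ⟨Q y, p, q, r, hy, hp, hq, hr, hc.trans hnf⟩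

/-- Let `K` be a field of characteristic `≠ 2`, `d ∈ K^×` a non-square and
`L = K(√d)`.  Let `φ = ⟨a₁, …, a₆⟩` be an anisotropic diagonal quadratic form in six
variables over `K` whose determinant `a₁⋯a₆` lies in `−(K^×)²`.  If `φ` becomes isotropic
over `L`, then `φ` is equivalent to `λ • ⟨1, −d, −p, q, r, −dpqr⟩` for some
`λ, p, q, r ∈ K^×`. -/
theorem anisotropic_sixdim_normal_form
    (K L : Type) [Field K] [Field L] [Algebra K L]
    (hchar : ringChar K ≠ 2)
    (d : K) (hd : d ≠ 0) (hnonsq : ¬∃ x : K, x ^ 2 = d)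
    (hquad : Module.finrank K L = 2)
    (hsqrt : ∃ δ : L, δ ^ 2 = algebraMap K L d)
    (a : Fin 6 → K)
    (hdet : ∃ u : K, u ≠ 0 ∧ a 0 * a 1 * a 2 * a 3 * a 4 * a 5 = -(u ^ 2))
    (haniso : (weightedSumSquares K a).Anisotropic)
    (hiso : ¬(weightedSumSquares L fun i => algebraMap K L (a i)).Anisotropic) :
    ∃ lam p q r : K, lam ≠ 0 ∧ p ≠ 0 ∧ q ≠ 0 ∧ r ≠ 0 ∧
      (weightedSumSquares K a).Equivalent
        (lam • weightedSumSquares K ![1, -d, -p, q, r, -(d * p * q * r)]) :=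
  anisotropic_sixdim_normal_form_general K L hchar d hnonsq hquad hsqrt a hdet haniso hiso
end
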